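/- Let M, a ∈ ℝ with 0 < |a| < M, and set r₋ = M − √(M²−a²). Then A_m(r₋) ≠ 0 for every m ∈ {−2, −1, 1, 2}, while A_0(r₋) = 0. -/
import Mathlib


noncomputable section

/-- `Δ(r) = r² − 2Mr + a²`. -/
def Δk (M a r : ℝ) : ℝ := r^2 - 2*M*r + a^2

/-- The polynomial `A_m(r)` governing the leading-order asymptotics of the spin `+2`
Teukolsky field. -/
def Am (M a : ℝ) (m : ℤ) (r : ℝ) : ℂ :=
  (1/3 : ℂ) * (3 * ((Δk M a r : ℝ) : ℂ)^2
    + Complex.I * (a : ℂ) * (m : ℂ) * ((r : ℂ) - (M : ℂ)) *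
        (4 * ((a : ℂ)^2 - (M : ℂ)^2) + 6 * ((Δk M a r : ℝ) : ℂ))
    - (a : ℂ)^2 * (m : ℂ)^2 *
        (2 * ((Δk M a r : ℝ) : ℂ) + 6 * ((a : ℂ)^2 - (M : ℂ)^2)
          + 4 * ((r : ℂ) - (M : ℂ))^2)
    - 4 * Complex.I * (a : ℂ)^3 * (m : ℂ)^3 * ((r : ℂ) - (M : ℂ))
    + 2 * (a : ℂ)^4 * (m : ℂ)^4)

/-- **Nonvanishing of `A_m(r₋)` for `m = ±1, ±2`, and vanishing for `m = 0`.** -/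
theorem stmt_16 (M a : ℝ) (ha : 0 < |a|) (haM : |a| < M) :
    (∀ m : ℤ, m = -2 ∨ m = -1 ∨ m = 1 ∨ m = 2 →
      Am M a m (M - Real.sqrt (M^2 - a^2)) ≠ 0) ∧
    Am M a 0 (M - Real.sqrt (M^2 - a^2)) = 0 := by
  set s : ℝ := Real.sqrt (M^2 - a^2) with hsdef
  have ha0 : a ≠ 0 := by intro h; simp [h] at ha
  have h1 : 0 < M^2 - a^2 := by nlinarith [sq_abs a, abs_nonneg a]
  have hs : 0 < s := Real.sqrt_pos.mpr h1
  have hs2 : s^2 = M^2 - a^2 := Real.sq_sqrt h1.le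
  have hΔ : Δk M a (M - s) = 0 := by simp only [Δk]; nlinarith [hs2]
  have hM2 : (M:ℂ)^2 = (s:ℂ)^2 + (a:ℂ)^2 := by
    norm_cast; linarith
  constructor
  · intro m hm
    have hm0 : (m:ℝ) ≠ 0 := by rcases hm with h|h|h|h <;> subst h <;> norm_num
    set x : ℂ := (a:ℂ) * (m:ℂ) with hxdef
    have hx : x ≠ 0 :=
      mul_ne_zero (by exact_mod_cast ha0) (by exact_mod_cast hm0)
    have hfac : Am M a m (M - s) =
        (2/3 : ℂ) * (((s:ℂ))^2 + x^2) * x * (x + 2*Complex.I*(s:ℂ)) := by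
      simp only [Am, hΔ, hxdef]
      push_cast
      linear_combination (2*(a:ℂ)^2*(m:ℂ)^2 + (4/3)*Complex.I*(a:ℂ)*(m:ℂ)*(s:ℂ)) * hM2
    rw [hfac]
    have hP : ((s:ℂ))^2 + x^2 ≠ 0 := by
      have : ((s:ℂ))^2 + x^2 = ((s^2 + (a*(m:ℝ))^2 : ℝ) : ℂ) := by
        push_cast [hxdef]; ring
      rw [this]
      norm_cast
      positivity
    have hQ : x + 2*Complex.I*(s:ℂ) ≠ 0 := by
      intro h
      have him := congrArg Complex.im h
      simp [hxdef] at him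
      exact absurd him hs.ne'
    exact mul_ne_zero (mul_ne_zero (mul_ne_zero (by norm_num) hP) hx) hQ
  · simp [Am, hΔ]
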